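/- arXiv:1407.0381 — 2 statements merged into one kernel-verified Lean document; each statement's English description precedes it below -/
import Mathlib

section
/- Let m ≥ 1 be an integer, λ > 0, and X ~ Poisson(λ). Then Var((X)_m) = λ^m·m!·Σ_{k=0}^{m−1} C(m,k)·λ^k/k!; consequently λ ↦ Var((X)_m) is increasing in λ, and Var((X)_m) ≤ (λm)^m · max( (2e)^{2√(λm)}/(π·√(λm)), 1 ). -/
open scoped BigOperators
open Real

noncomputable section

/-- The Poisson probability mass function with mean `t`. -/
def poissonPMF (t : ℝ) (m : ℕ) : ℝ := Real.exp (-t) * t ^ m / (m.factorial : ℝ)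

/-- `E[(X)_m]` for `X ~ Poisson(λ)`, where `(x)_m` is the falling factorial. -/
def fallingMean (lam : ℝ) (m : ℕ) : ℝ :=
  ∑' x : ℕ, poissonPMF lam x * (x.descFactorial m : ℝ)

/-- `Var((X)_m)` for `X ~ Poisson(λ)`. -/
def fallingVar (lam : ℝ) (m : ℕ) : ℝ :=
  (∑' x : ℕ, poissonPMF lam x * ((x.descFactorial m : ℝ)) ^ 2) - (fallingMean lam m) ^ 2

/-!
Shifting the summation index by `k` turns `P(X = y + k) · (y + k)_k` into `λ^k · P(X = y)`, so
`E[(X)_k] = λ^k`. Expanding `(y + m)_m = ∑ₖ C(m,k)² (m-k)! (y)_k` (Vandermonde) then gives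
`E[(X)_m²] = ∑_{k ≤ m} C(m,k)² (m-k)! λ^(m+k)`, whose top term `k = m` is `E[(X)_m]²`.
Hence the variance is a polynomial in `λ` with nonnegative coefficients, and `C(m,j) ≤ m^j / j!`
bounds it by `(λm)^m (∑_j (λm)^(j/2) / j!)² ≤ (λm)^m e^(2√(λm))`; finally `π s ≤ 4^s` gives
`e^(2s) ≤ (2e)^(2s) / (π s)` for `s > 0`.
-/

theorem HasSum.of_nat_add {G : Type*} [AddCommGroup G] [TopologicalSpace G]
    [IsTopologicalAddGroup G] {f : ℕ → G} {a : G} (k : ℕ) (hf : ∀ i < k, f i = 0)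
    (h : HasSum (fun n ↦ f (n + k)) a) : HasSum f a := by
  rw [← hasSum_nat_add_iff' k, Finset.sum_eq_zero fun i hi ↦ hf i (Finset.mem_range.mp hi),
    sub_zero]
  exact h

theorem Nat.add_descFactorial_eq_sum_choose_sq (y m : ℕ) :
    (y + m).descFactorial m
      = ∑ k ∈ Finset.range (m + 1), m.choose k ^ 2 * (m - k).factorial * y.descFactorial k := by
  rw [Nat.descFactorial_eq_factorial_mul_choose, Nat.add_choose_eq,
    Finset.Nat.sum_antidiagonal_eq_sum_range_succ (fun i j ↦ y.choose i * m.choose j) m,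
    Finset.mul_sum]
  refine Finset.sum_congr rfl fun k hk ↦ ?_
  have hkm : k ≤ m := Nat.lt_succ_iff.mp (Finset.mem_range.mp hk)
  rw [Nat.choose_symm hkm, Nat.descFactorial_eq_factorial_mul_choose,
    ← Nat.choose_mul_factorial_mul_factorial hkm]
  ring

theorem hasSum_poissonPMF (t : ℝ) : HasSum (poissonPMF t) 1 := by
  have h := (NormedSpace.expSeries_div_hasSum_exp t).mul_left (exp (-t))
  rw [← exp_eq_exp_ℝ, ← exp_add, neg_add_cancel, exp_zero] at h
  rwa [show poissonPMF t = fun n ↦ exp (-t) * (t ^ n / n.factorial) from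
    funext fun n ↦ mul_div_assoc _ _ _]

theorem poissonPMF_add_mul_descFactorial (t : ℝ) (y k : ℕ) :
    poissonPMF t (y + k) * ((y + k).descFactorial k : ℝ) = t ^ k * poissonPMF t y := by
  have hfac : ((y + k).factorial : ℝ) = y.factorial * (y + k).descFactorial k := by
    have := Nat.factorial_mul_descFactorial (Nat.le_add_left k y)
    rw [Nat.add_sub_cancel] at this
    exact_mod_cast this.symm
  have hdesc : ((y + k).descFactorial k : ℝ) ≠ 0 := by
    exact_mod_cast (Nat.descFactorial_pos.mpr (Nat.le_add_left k y)).ne'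
  rw [poissonPMF, poissonPMF, hfac, pow_add]
  field_simp

theorem poissonPMF_mul_descFactorial_of_lt (t : ℝ) {x k : ℕ} (h : x < k) :
    poissonPMF t x * (x.descFactorial k : ℝ) = 0 := by
  rw [Nat.descFactorial_eq_zero_iff_lt.mpr h, Nat.cast_zero, mul_zero]

theorem hasSum_poissonPMF_mul_descFactorial (t : ℝ) (k : ℕ) :
    HasSum (fun x : ℕ ↦ poissonPMF t x * (x.descFactorial k : ℝ)) (t ^ k) :=
  .of_nat_add k (fun _ ↦ poissonPMF_mul_descFactorial_of_lt t) <| by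
    simpa only [poissonPMF_add_mul_descFactorial, mul_one] using
      (hasSum_poissonPMF t).mul_left (t ^ k)

theorem hasSum_poissonPMF_mul_descFactorial_sq (t : ℝ) (m : ℕ) :
    HasSum (fun x : ℕ ↦ poissonPMF t x * (x.descFactorial m : ℝ) ^ 2)
      (∑ k ∈ Finset.range (m + 1),
        (m.choose k : ℝ) ^ 2 * (m - k).factorial * t ^ (m + k)) := by
  refine .of_nat_add m (fun x hx ↦ ?_) ?_
  · rw [pow_two, ← mul_assoc, poissonPMF_mul_descFactorial_of_lt t hx, zero_mul]
  have hterm (y : ℕ) : poissonPMF t (y + m) * ((y + m).descFactorial m : ℝ) ^ 2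
      = ∑ k ∈ Finset.range (m + 1), t ^ m * ((m.choose k : ℝ) ^ 2 * (m - k).factorial) *
          (poissonPMF t y * (y.descFactorial k : ℝ)) := by
    rw [pow_two, ← mul_assoc, poissonPMF_add_mul_descFactorial,
      Nat.add_descFactorial_eq_sum_choose_sq]
    push_cast
    rw [Finset.mul_sum]
    exact Finset.sum_congr rfl fun k _ ↦ by ring
  have hsum :
      ∑ k ∈ Finset.range (m + 1), (m.choose k : ℝ) ^ 2 * (m - k).factorial * t ^ (m + k)
        = ∑ k ∈ Finset.range (m + 1),
            t ^ m * ((m.choose k : ℝ) ^ 2 * (m - k).factorial) * t ^ k :=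
    Finset.sum_congr rfl fun k _ ↦ by ring
  simp only [hterm, hsum]
  exact hasSum_sum fun k _ ↦ (hasSum_poissonPMF_mul_descFactorial t k).mul_left _

theorem fallingVar_eq_sum (lam : ℝ) (m : ℕ) :
    fallingVar lam m
      = ∑ k ∈ Finset.range m, (m.choose k : ℝ) ^ 2 * (m - k).factorial * lam ^ (m + k) := by
  rw [fallingVar, fallingMean, (hasSum_poissonPMF_mul_descFactorial lam m).tsum_eq,
    (hasSum_poissonPMF_mul_descFactorial_sq lam m).tsum_eq, Finset.sum_range_succ]
  simp only [Nat.choose_self, Nat.sub_self, Nat.factorial_zero, Nat.cast_one, one_pow, one_mul]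
  ring

theorem fallingVar_eq (lam : ℝ) (m : ℕ) :
    fallingVar lam m
      = lam ^ m * (m.factorial : ℝ) *
          ∑ j ∈ Finset.range m, (m.choose j : ℝ) * lam ^ j / (j.factorial : ℝ) := by
  rw [fallingVar_eq_sum, Finset.mul_sum]
  refine Finset.sum_congr rfl fun j hj ↦ ?_
  have hfac : (m.choose j : ℝ) * j.factorial * (m - j).factorial = m.factorial := by
    exact_mod_cast Nat.choose_mul_factorial_mul_factorial (Finset.mem_range.mp hj).le
  have hj : (j.factorial : ℝ) ≠ 0 := by positivity
  rw [pow_add]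
  field_simp
  linear_combination lam ^ m * lam ^ j * (m.choose j : ℝ) * hfac

theorem fallingVar_monotoneOn (m : ℕ) : MonotoneOn (fallingVar · m) (Set.Ici 0) := by
  intro lam₁ h₁ lam₂ _ h
  simp only [fallingVar_eq_sum]
  gcongr

theorem sum_choose_mul_pow_div_factorial_le_exp (m : ℕ) {x : ℝ} (hx : 0 ≤ x) :
    ∑ j ∈ Finset.range m, (m.choose j : ℝ) * x ^ j / j.factorial
      ≤ exp (2 * √(x * m)) := by
  set s := √(x * m)
  have hterm (j : ℕ) :
      (m.choose j : ℝ) * x ^ j / j.factorial ≤ (s ^ j / j.factorial) ^ 2 := by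
    have hsj : (s ^ j) ^ 2 = x ^ j * m ^ j := by
      rw [← pow_mul, mul_comm j 2, pow_mul, Real.sq_sqrt (by positivity), mul_pow]
    calc (m.choose j : ℝ) * x ^ j / j.factorial
        ≤ (m ^ j / j.factorial) * x ^ j / j.factorial := by
          gcongr; exact Nat.choose_le_pow_div j m
      _ = (s ^ j / j.factorial) ^ 2 := by rw [div_pow, hsj]; ring
  calc ∑ j ∈ Finset.range m, (m.choose j : ℝ) * x ^ j / j.factorial
      ≤ ∑ j ∈ Finset.range m, (s ^ j / j.factorial) ^ 2 :=
        Finset.sum_le_sum fun j _ ↦ hterm j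
    _ ≤ (∑ j ∈ Finset.range m, s ^ j / j.factorial) ^ 2 :=
        Finset.sum_sq_le_sq_sum_of_nonneg fun _ _ ↦ by positivity
    _ ≤ exp s ^ 2 := by gcongr; exact Real.sum_le_exp_of_nonneg (Real.sqrt_nonneg _) m
    _ = exp (2 * s) := by rw [← Real.exp_nat_mul]; norm_num

theorem fallingVar_le_mul_exp (m : ℕ) {lam : ℝ} (hlam : 0 ≤ lam) :
    fallingVar lam m ≤ (lam * m) ^ m * exp (2 * √(lam * m)) := by
  rw [fallingVar_eq, mul_pow]
  gcongr
  · exact_mod_cast Nat.factorial_le_pow m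
  · exact sum_choose_mul_pow_div_factorial_le_exp m hlam

theorem pi_mul_le_two_rpow {s : ℝ} (hs : 0 ≤ s) : π * s ≤ 2 ^ (2 * s) := by
  -- `π < 3.15 < 2 e log 2`, and `e u ≤ exp u` at `u = 2 s log 2`
  have hπ : π ≤ exp 1 * (log 2 * 2) := by
    nlinarith [Real.pi_lt_d2, Real.exp_one_gt_d9, Real.log_two_gt_d9]
  calc π * s ≤ exp 1 * (log 2 * 2) * s := by gcongr
    _ = exp 1 * (log 2 * (2 * s)) := by ring
    _ ≤ exp (log 2 * (2 * s)) := Real.exp_one_mul_le_exp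
    _ = 2 ^ (2 * s) := (Real.rpow_def_of_pos two_pos _).symm

theorem exp_two_mul_le_max {s : ℝ} (hs : 0 ≤ s) :
    exp (2 * s) ≤ max ((2 * exp 1) ^ (2 * s) / (π * s)) 1 := by
  rcases hs.eq_or_lt with rfl | hs
  · simp
  refine le_max_of_le_left ?_
  rw [le_div_iff₀ (by positivity), Real.mul_rpow two_pos.le (exp_pos 1).le, Real.exp_one_rpow,
    mul_comm]
  gcongr
  exact pi_mul_le_two_rpow hs.le

theorem var_falling_factorial_poisson_general (m : ℕ) (lam : ℝ) (hlam : 0 < lam) :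
    fallingVar lam m
        = lam ^ m * (m.factorial : ℝ) *
            ∑ j ∈ Finset.range m, (m.choose j : ℝ) * lam ^ j / (j.factorial : ℝ) ∧
    (∀ lam1 lam2 : ℝ, 0 < lam1 → lam1 ≤ lam2 → fallingVar lam1 m ≤ fallingVar lam2 m) ∧
    fallingVar lam m ≤
      (lam * m) ^ m *
        max ((2 * Real.exp 1) ^ (2 * Real.sqrt (lam * m)) /
              (Real.pi * Real.sqrt (lam * m))) 1 := by
  refine ⟨fallingVar_eq lam m, fun lam₁ lam₂ h₁ h ↦ ?_, ?_⟩
  · exact fallingVar_monotoneOn m (Set.mem_Ici.mpr h₁.le) (Set.mem_Ici.mpr (h₁.le.trans h)) h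
  calc fallingVar lam m ≤ (lam * m) ^ m * exp (2 * √(lam * m)) :=
        fallingVar_le_mul_exp m hlam.le
    _ ≤ _ := by gcongr; exact exp_two_mul_le_max (Real.sqrt_nonneg _)

/-- variance of the falling factorial of a Poisson random variable. -/
theorem var_falling_factorial_poisson (m : ℕ) (hm : 1 ≤ m) (lam : ℝ) (hlam : 0 < lam) :
    fallingVar lam m
        = lam ^ m * (m.factorial : ℝ) *
            ∑ j ∈ Finset.range m, (m.choose j : ℝ) * lam ^ j / (j.factorial : ℝ) ∧
    (∀ lam1 lam2 : ℝ, 0 < lam1 → lam1 ≤ lam2 → fallingVar lam1 m ≤ fallingVar lam2 m) ∧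
    fallingVar lam m ≤
      (lam * m) ^ m *
        max ((2 * Real.exp 1) ^ (2 * Real.sqrt (lam * m)) /
              (Real.pi * Real.sqrt (lam * m))) 1 :=
  var_falling_factorial_poisson_general m lam hlam
end
end

section
/- Let L ≥ 1 be an integer and let p be any real polynomial of degree at most L achieving the best uniform approximation of φ on [0,1], i.e., sup_{x∈[0,1]} |p(x) − φ(x)| = E_L(φ,[0,1]). Then the constant term of p equals the approximation error: p(0) = E_L(φ,[0,1]). -/
open Real

noncomputable section

/-- `φ(x) = x log (1/x)`, with `φ(0) = 0`. -/
def phi (x : ℝ) : ℝ := x * Real.log (1 / x)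

/-- Best uniform polynomial approximation error of `f` on `[a,b]` by polynomials of
degree at most `L`. -/
def bestApproxError (L : ℕ) (f : ℝ → ℝ) (a b : ℝ) : ℝ :=
  ⨅ p : {p : Polynomial ℝ // p.natDegree ≤ L},
    ⨆ x : Set.Icc a b, |f ↑x - Polynomial.eval (↑x : ℝ) p.1|

/-! The error `e = p - φ = p + x log x` satisfies `e 0 = p 0` and drops below `p 0` just to
the right of `0`, where `x log x` has slope `-∞`; so `p 0 ≠ -E`, and it suffices to show
`|p 0| = E`. If `|p 0| < E`, every extremal point of `e` other than `1` is an interior critical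
point, a zero of `p' + log x + 1`. By Rolle, two consecutive ones enclose a root of
`x p'' + 1`, a nonzero polynomial of degree at most `L - 1`; hence `e` has at most `L + 1`
extremal points. A best approximant has at least `L + 2`: otherwise subtracting a small
multiple of the polynomial that interpolates `e` on them lowers the error. -/

open Polynomial Set

theorem card_le_card_add_one_of_hasDerivAt {f f' : ℝ → ℝ} {I : Set ℝ}
    (hI : I.OrdConnected) (hf : ∀ x ∈ I, HasDerivAt f (f' x) x) {s t : Finset ℝ}
    (hs : ∀ x ∈ s, x ∈ I ∧ f x = 0) (ht : ∀ x ∈ I, f' x = 0 → x ∈ t) :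
    s.card ≤ t.card + 1 :=
  Finset.card_le_of_interleaved fun x hx y hy hxy _ => by
    have hsub : Icc x y ⊆ I := hI.out (hs x hx).1 (hs y hy).1
    obtain ⟨z, hz, hz0⟩ := exists_hasDerivAt_eq_zero hxy
      (fun z hz => (hf z (hsub hz)).continuousAt.continuousWithinAt)
      ((hs x hx).2.trans (hs y hy).2.symm) fun z hz => hf z (hsub (Ioo_subset_Icc_self hz))
    exact ⟨z, ht z (hsub (Ioo_subset_Icc_self hz)) hz0, hz⟩

theorem IsLocalMax.hasDerivAt_eq_zero_of_abs {f : ℝ → ℝ} {f' x : ℝ}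
    (h : IsLocalMax (fun y => |f y|) x) (hf : HasDerivAt f f' x) : f' = 0 := by
  rcases le_total 0 (f x) with hx | hx
  · refine IsLocalMax.hasDerivAt_eq_zero (h.mono fun y hy => ?_) hf
    exact (le_abs_self _).trans (hy.trans (abs_of_nonneg hx).le)
  · refine IsLocalMin.hasDerivAt_eq_zero (h.mono fun y hy => ?_) hf
    dsimp only at hy
    rw [abs_of_nonpos hx] at hy
    linarith [neg_abs_le (f y)]

theorem exists_pos_forall_abs_sub_mul_lt {X : Type*} [TopologicalSpace X] [CompactSpace X]
    {e r : X → ℝ} (he : Continuous e) (hr : Continuous r) {E : ℝ} (hE : 0 < E)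
    (hle : ∀ x, |e x| ≤ E) (hpos : ∀ x, |e x| = E → 0 < e x * r x) :
    ∃ ε > 0, ∀ x, |e x - ε * r x| < E := by
  obtain ⟨M, hM⟩ := isCompact_univ.exists_bound_of_continuousOn hr.continuousOn
  obtain ⟨E', hE'0, hE'E, hE'⟩ :
      ∃ E', 0 ≤ E' ∧ E' < E ∧ ∀ x, e x * r x ≤ 0 → |e x| ≤ E' := by
    rcases {x | e x * r x ≤ 0}.eq_empty_or_nonempty with hK | hK
    · exact ⟨0, le_rfl, hE, fun x hx => (eq_empty_iff_forall_notMem.1 hK x hx).elim⟩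
    · obtain ⟨x₀, hx₀, hmax⟩ :=
        (isClosed_le (he.mul hr) continuous_const).isCompact.exists_isMaxOn hK
          he.abs.continuousOn
      exact ⟨|e x₀|, abs_nonneg _, (hle x₀).lt_of_ne fun h => (hpos x₀ h).not_ge hx₀,
        fun x hx => hmax hx⟩
  set ε := (E - E') / (|M| + 1)
  have hε : 0 < ε := div_pos (by linarith) (by positivity)
  refine ⟨ε, hε, fun x => ?_⟩
  have hεr : |ε * r x| < E - E' := by
    rw [abs_mul, abs_of_pos hε]
    calc ε * |r x| ≤ ε * |M| :=
          mul_le_mul_of_nonneg_left ((hM x (mem_univ x)).trans (le_abs_self M)) hε.le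
      _ < ε * (|M| + 1) := by gcongr; linarith
      _ = E - E' := div_mul_cancel₀ _ (by positivity)
  have hex := abs_le.1 (hle x)
  have hεr' := abs_lt.1 hεr
  by_cases h : e x * r x ≤ 0
  · calc |e x - ε * r x| ≤ |e x| + |ε * r x| := abs_sub _ _
      _ < E := by linarith [hE' x h]
  · rcases mul_pos_iff.1 (not_le.1 h) with ⟨he0, hr0⟩ | ⟨he0, hr0⟩
    · have := mul_pos hε hr0
      exact abs_sub_lt_iff.2 ⟨by linarith, by linarith⟩
    · have := mul_neg_of_pos_of_neg hε hr0
      exact abs_sub_lt_iff.2 ⟨by linarith, by linarith⟩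

theorem bestApproxError_le_iSup {L : ℕ} {f : ℝ → ℝ} {a b : ℝ} {q : ℝ[X]}
    (hq : q.natDegree ≤ L) :
    bestApproxError L f a b ≤ ⨆ x : Icc a b, |f x - eval (x : ℝ) q| :=
  ciInf_le ⟨0, by rintro _ ⟨r, rfl⟩; exact Real.iSup_nonneg fun _ => abs_nonneg _⟩
    (⟨q, hq⟩ : {p : ℝ[X] // p.natDegree ≤ L})

theorem exists_extremal_finset_of_iSup_eq_bestApproxError {L : ℕ} {f : ℝ → ℝ} {a b : ℝ}
    (hab : a ≤ b) (hf : ContinuousOn f (Icc a b)) {p : ℝ[X]} (hp : p.natDegree ≤ L)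
    (hbest : ⨆ x : Icc a b, |f x - eval (x : ℝ) p| = bestApproxError L f a b)
    (hE : 0 < bestApproxError L f a b) :
    ∃ s : Finset ℝ, ↑s ⊆ {x ∈ Icc a b | |f x - eval x p| = bestApproxError L f a b} ∧
      L + 2 ≤ s.card := by
  set E := bestApproxError L f a b
  set A := {x ∈ Icc a b | |f x - eval x p| = E}
  by_contra! hsmall
  have hA : A.Finite := Set.not_infinite.1 fun hinf => by
    obtain ⟨s, hsA, hs⟩ := hinf.exists_subset_card_eq (L + 2)
    exact (hsmall s hsA).ne hs
  set r := Lagrange.interpolate hA.toFinset id fun x => f x - eval x p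
  have hr : r.natDegree ≤ L := by
    refine natDegree_le_of_degree_le (Order.le_of_lt_succ ?_)
    calc r.degree < hA.toFinset.card := Lagrange.degree_interpolate_lt _ (injOn_id _)
      _ ≤ ↑(L + 1) := by exact_mod_cast Nat.le_of_lt_succ (hsmall _ (by simp))
  have hrA : ∀ x ∈ A, eval x r = f x - eval x p := fun x hx =>
    Lagrange.eval_interpolate_at_node _ (injOn_id _) (hA.mem_toFinset.2 hx)
  have : Nonempty (Icc a b) := (nonempty_Icc.2 hab).to_subtype
  have he : Continuous fun x : Icc a b => f x - eval (x : ℝ) p :=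
    hf.domRestrict.sub (p.continuous.comp continuous_subtype_val)
  have hle : ∀ x : Icc a b, |f x - eval (x : ℝ) p| ≤ E := fun x =>
    hbest ▸ le_ciSup (isCompact_range he.abs).bddAbove x
  obtain ⟨ε, hε, hlt⟩ := exists_pos_forall_abs_sub_mul_lt he
    (r.continuous.comp continuous_subtype_val) hE hle fun x hx => by
      rw [Function.comp_apply, hrA x ⟨x.2, hx⟩]
      exact mul_self_pos.2 fun h0 => hE.ne' (by rw [← hx, h0, abs_zero])
  have hq : (p + C ε * r).natDegree ≤ L :=
    (natDegree_add_le _ _).trans (max_le hp ((natDegree_C_mul_le _ _).trans hr))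
  obtain ⟨x₀, -, hx₀⟩ := isCompact_univ.exists_isMaxOn univ_nonempty
    (he.sub (continuous_const.mul (r.continuous.comp continuous_subtype_val))).abs.continuousOn
  refine (bestApproxError_le_iSup hq).not_gt ((ciSup_le fun x => ?_).trans_lt (hlt x₀))
  simpa [sub_add_eq_sub_sub] using hx₀ (mem_univ x)

theorem phi_eq_negMulLog : phi = negMulLog :=
  funext fun x => by rw [phi, negMulLog, one_div, log_inv]; ring

theorem Polynomial.natDegree_X_mul_derivative_derivative_add_one_le {R : Type*}
    [CommSemiring R] (p : R[X]) :
    (X * derivative (derivative p) + 1).natDegree ≤ p.natDegree - 1 := by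
  rcases lt_or_ge p.natDegree 2 with hp | hp
  · rw [show derivative (derivative p) = 0 from iterate_derivative_eq_zero (x := 2) hp]
    simp
  · have h2 := natDegree_iterate_derivative p 2
    have hX := natDegree_mul_le (p := X) (q := derivative (derivative p))
    have h1 := natDegree_add_le (X * derivative (derivative p)) 1
    simp only [Function.iterate_succ, Function.iterate_zero, Function.comp_apply, id] at h2
    simp only [natDegree_one] at h1
    have := natDegree_X_le (R := R)
    omega

theorem card_le_of_hasDerivAt_eval_sub_negMulLog_eq_zero (p : ℝ[X]) {s : Finset ℝ}
    (hs : ∀ x ∈ s, 0 < x ∧ HasDerivAt (fun y => eval y p - negMulLog y) 0 x) :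
    s.card ≤ p.natDegree - 1 + 1 := by
  set q : ℝ[X] := X * derivative (derivative p) + 1
  have hq : q ≠ 0 := fun h => by simpa [q] using congr_arg (eval 0) h
  have hderiv : ∀ x ∈ Ioi (0 : ℝ), HasDerivAt (fun y => eval y (derivative p) + (log y + 1))
      (eval x (derivative (derivative p)) + x⁻¹) x := fun x hx =>
    ((derivative p).hasDerivAt x).add ((hasDerivAt_log (ne_of_gt hx)).add_const 1)
  calc s.card ≤ q.roots.toFinset.card + 1 := by
        refine card_le_card_add_one_of_hasDerivAt ordConnected_Ioi hderiv
          (fun x hx => ⟨(hs x hx).1, ?_⟩) fun x hx h => ?_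
        · have := (hs x hx).2.unique
            ((p.hasDerivAt x).sub (hasDerivAt_negMulLog (hs x hx).1.ne'))
          linarith
        · rw [Multiset.mem_toFinset, mem_roots hq, IsRoot, eval_add, eval_mul, eval_X, eval_one]
          have hx0 : x ≠ 0 := ne_of_gt hx
          field_simp at h
          linarith
    _ ≤ q.natDegree + 1 := by gcongr; exact (Multiset.toFinset_card_le _).trans (card_roots' q)
    _ ≤ p.natDegree - 1 + 1 := by gcongr; exact natDegree_X_mul_derivative_derivative_add_one_le p

theorem exists_eval_sub_negMulLog_lt_eval_zero (p : ℝ[X]) :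
    ∃ x ∈ Icc (0 : ℝ) 1, eval x p - negMulLog x < eval 0 p := by
  obtain ⟨M, hM⟩ := (isCompact_Icc (a := (0 : ℝ)) (b := 1)).exists_bound_of_continuousOn
    p.divX.continuousOn
  have hM0 : 0 ≤ M := (norm_nonneg _).trans (hM 0 ⟨le_rfl, zero_le_one⟩)
  set x := exp (-(M + 1))
  have hx : x ∈ Icc (0 : ℝ) 1 := ⟨(exp_pos _).le, exp_le_one_iff.2 (by linarith)⟩
  refine ⟨x, hx, ?_⟩
  have hp : eval x p = eval x p.divX * x + eval 0 p := by
    conv_lhs => rw [← divX_mul_X_add p]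
    simp [coeff_zero_eq_eval_zero]
  have hdivX : eval x p.divX ≤ M := (le_norm_self _).trans (hM x hx)
  rw [hp, negMulLog, log_exp]
  nlinarith [exp_pos (-(M + 1))]

theorem card_le_of_forall_abs_eval_sub_negMulLog_eq {p : ℝ[X]} {E : ℝ}
    (hle : ∀ x ∈ Icc (0 : ℝ) 1, |eval x p - negMulLog x| ≤ E) (h0 : |eval 0 p| < E)
    {s : Finset ℝ} (hs : ∀ x ∈ s, x ∈ Icc (0 : ℝ) 1 ∧ |eval x p - negMulLog x| = E) :
    s.card ≤ p.natDegree - 1 + 2 := by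
  have hcrit : ∀ x ∈ s.erase 1, 0 < x ∧ HasDerivAt (fun y => eval y p - negMulLog y) 0 x := by
    intro x hx
    obtain ⟨hx1, hxs⟩ := Finset.mem_erase.1 hx
    obtain ⟨⟨hx0le, hxle1⟩, hxE⟩ := hs x hxs
    have hx0 : 0 < x := hx0le.lt_of_ne <| by
      rintro rfl
      rw [negMulLog_zero, sub_zero] at hxE
      exact h0.ne hxE
    have hmax : IsLocalMax (fun y => |eval y p - negMulLog y|) x :=
      IsMaxOn.isLocalMax (fun y hy => hxE ▸ hle y hy) (Icc_mem_nhds hx0 (hxle1.lt_of_ne hx1))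
    have hd := (p.hasDerivAt x).sub (hasDerivAt_negMulLog hx0.ne')
    exact ⟨hx0, hmax.hasDerivAt_eq_zero_of_abs hd ▸ hd⟩
  have := card_le_of_hasDerivAt_eval_sub_negMulLog_eq_zero p hcrit
  have := Finset.pred_card_le_card_erase (s := s) (a := 1)
  omega

/-- the constant term of the best polynomial approximant of `φ` on `[0,1]`
equals the approximation error. -/
theorem best_poly_constant_term (L : ℕ) (hL : 1 ≤ L) (p : Polynomial ℝ)
    (hdeg : p.natDegree ≤ L)
    (hbest : (⨆ x : Set.Icc (0 : ℝ) 1, |Polynomial.eval (↑x : ℝ) p - phi ↑x|)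
              = bestApproxError L phi 0 1) :
    Polynomial.eval 0 p = bestApproxError L phi 0 1 := by
  rw [phi_eq_negMulLog] at hbest ⊢
  set E := bestApproxError L negMulLog 0 1
  have he : Continuous fun x => eval x p - negMulLog x := p.continuous.sub continuous_negMulLog
  have hle : ∀ x ∈ Icc (0 : ℝ) 1, |eval x p - negMulLog x| ≤ E := fun x hx =>
    hbest ▸ le_ciSup (isCompact_range (he.comp continuous_subtype_val).abs).bddAbove
      (⟨x, hx⟩ : Icc (0 : ℝ) 1)
  have hE : E ≤ |eval 0 p| := by
    by_contra! h0
    obtain ⟨s, hsA, hs⟩ := exists_extremal_finset_of_iSup_eq_bestApproxError zero_le_one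
      continuous_negMulLog.continuousOn hdeg (by simpa only [abs_sub_comm] using hbest)
      ((abs_nonneg _).trans_lt h0)
    have := card_le_of_forall_abs_eval_sub_negMulLog_eq hle h0 fun x hx => by
      simpa only [abs_sub_comm, mem_ofPred_eq] using hsA hx
    omega
  obtain ⟨x, hx, hlt⟩ := exists_eval_sub_negMulLog_lt_eval_zero p
  have hx := abs_le.1 (hle x hx)
  have h0 := abs_le.1 (hle 0 ⟨le_rfl, zero_le_one⟩)
  rw [negMulLog_zero, sub_zero] at h0
  rcases le_abs'.1 hE with h | h <;> linarith
end
end
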